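/- Assume A is a special extension of E (finite symmetric integral relation algebras). Then for every n ∈ ω, the set B_n = {1'} ∪ {x^(i) : x a diversity atom of A, i < n} ∪ {J(a,n) : a a diversity atom of E} is the set of atoms of a (finite) subalgebra of C_E(A); that is, the product of any two elements of B_n is a join of elements of B_n. -/

import Mathlib

universe u v

/-- Non-associative relation algebras: Boolean algebras with a binary
relative multiplication `comp`, unary converse `conv`, and identity `ide`. -/
class NA (α : Type u) extends BooleanAlgebra α where
  comp : α → α → α
  conv : α → α
  ide : α
  comp_ide : ∀ x : α, comp x ide = x
  ide_comp : ∀ x : α, comp ide x = x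
  conv_conv : ∀ x : α, conv (conv x) = x
  conv_sup : ∀ x y : α, conv (x ⊔ y) = conv x ⊔ conv y
  comp_sup : ∀ x y z : α, comp x (y ⊔ z) = comp x y ⊔ comp x z
  sup_comp : ∀ x y z : α, comp (x ⊔ y) z = comp x z ⊔ comp y z
  peirce1 : ∀ x y z : α, comp x y ⊓ z = ⊥ ↔ comp (conv x) z ⊓ y = ⊥
  peirce2 : ∀ x y z : α, comp x y ⊓ z = ⊥ ↔ comp z (conv y) ⊓ x = ⊥

/-- Relation algebras: associative non-associative relation algebras. -/
class RA (α : Type u) extends NA α where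
  comp_assoc : ∀ x y z : α, comp (comp x y) z = comp x (comp y z)

namespace NA

variable {α : Type u} [NA α]

/-- The diversity element 0'. -/
def div : α := (ide : α)ᶜ

/-- Converse is the identity. -/
def Symmetric (α : Type u) [NA α] : Prop := ∀ x : α, conv x = x

/-- The identity 1' is an atom. -/
def Integral (α : Type u) [NA α] : Prop := IsAtom (ide : α)

/-- A diversity atom: an atom below 0'. -/
def DivAtom (x : α) : Prop := IsAtom x ∧ x ≤ (div : α)

/-- A subalgebra of a (non-associative) relation algebra. -/
structure Subalgebra (α : Type u) [NA α] where
  carrier : Set α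
  bot_mem : ⊥ ∈ carrier
  top_mem : ⊤ ∈ carrier
  ide_mem : ide ∈ carrier
  compl_mem : ∀ x ∈ carrier, xᶜ ∈ carrier
  sup_mem : ∀ x ∈ carrier, ∀ y ∈ carrier, x ⊔ y ∈ carrier
  comp_mem : ∀ x ∈ carrier, ∀ y ∈ carrier, comp x y ∈ carrier
  conv_mem : ∀ x ∈ carrier, conv x ∈ carrier

/-- An atom of a subalgebra: a minimal nonzero element of the subalgebra. -/
def Subalgebra.AtomOf (E : Subalgebra α) (a : α) : Prop :=
  a ∈ E.carrier ∧ a ≠ ⊥ ∧ ∀ b ∈ E.carrier, b ≤ a → b = ⊥ ∨ b = a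

/-- A diversity atom of a subalgebra. -/
def Subalgebra.DivAtomOf (E : Subalgebra α) (a : α) : Prop :=
  E.AtomOf a ∧ a ≤ (div : α)

/-- `α` is (a copy of) the algebra E^{23}_q with atoms `e 0 = 1', e 1, …, e (q-1)`:
symmetric, integral, distinct diversity atoms multiply to 0', and
`e i ; e i = (e i)ᶜ` for diversity atoms. -/
def IsE23 (q : ℕ) (e : Fin q → α) : Prop :=
  Symmetric α ∧ Integral α ∧
  Function.Injective e ∧ (∀ i : Fin q, (i : ℕ) = 0 → e i = ide) ∧
  (∀ i, IsAtom (e i)) ∧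
  (∀ x : α, IsAtom x → ∃ i, x = e i) ∧
  (∀ i j : Fin q, (i : ℕ) ≠ 0 → (j : ℕ) ≠ 0 → i ≠ j →
    comp (e i) (e j) = (div : α)) ∧
  (∀ i : Fin q, (i : ℕ) ≠ 0 → comp (e i) (e i) = (e i)ᶜ)

/-- The subalgebra `Q` of `α` is a copy of E^{23}_q with atoms `e i`. -/
def IsE23Sub (Q : Subalgebra α) (q : ℕ) (e : Fin q → α) : Prop :=
  Function.Injective e ∧ (∀ i : Fin q, (i : ℕ) = 0 → e i = ide) ∧
  (∀ i, Q.AtomOf (e i)) ∧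
  (∀ x : α, Q.AtomOf x → ∃ i, x = e i) ∧
  (∀ i j : Fin q, (i : ℕ) ≠ 0 → (j : ℕ) ≠ 0 → i ≠ j →
    comp (e i) (e j) = (div : α)) ∧
  (∀ i : Fin q, (i : ℕ) ≠ 0 → comp (e i) (e i) = (e i)ᶜ)

/-- `cov` is a cover map for the subalgebra `E`: it sends each atom of the
ambient algebra to the atom of `E` containing it. -/
def CoverMap (E : Subalgebra α) (cov : α → α) : Prop :=
  ∀ x : α, IsAtom x → E.AtomOf (cov x) ∧ x ≤ cov x

/-- The ambient atomic algebra is obtained from the subalgebra `B` by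
splitting, with cover map `cov`. -/
def Splitting (B : Subalgebra α) (cov : α → α) : Prop :=
  CoverMap B cov ∧
  (∀ x y : α, DivAtom x → DivAtom y →
    (x = conv y → comp x y = comp (cov x) (cov y)) ∧
    (x ≠ conv y → comp x y = comp (cov x) (cov y) ⊓ (div : α)))

/-- The ambient algebra is a special extension of its subalgebra `E`. -/
def SpecialExt (E : Subalgebra α) : Prop :=
  (∀ a b c : α, E.DivAtomOf a → E.DivAtomOf b → E.DivAtomOf c →
    ¬(a = b ∧ b = c) → c ≤ comp a b →
    ∀ x y : α, IsAtom x → IsAtom y → x ≤ a → y ≤ b → c ≤ comp x y) ∧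
  (∀ a : α, E.DivAtomOf a → a ≤ comp a a →
    ∀ x y : α, IsAtom x → IsAtom y → x ≤ a → y ≤ a → comp x y ⊓ a ≠ ⊥)

/-- A flexible atom. -/
def Flexible (a : α) : Prop :=
  DivAtom a ∧ comp a a = ⊤ ∧
  ∀ x : α, DivAtom x → x ≠ a → comp x a = (div : α)

/-- A flexible atom of a subalgebra. -/
def FlexibleOf (E : Subalgebra α) (a : α) : Prop :=
  E.DivAtomOf a ∧ comp a a = ⊤ ∧
  ∀ x : α, E.DivAtomOf x → x ≠ a → comp x a = (div : α)

/-- A flexible trio of diversity atoms. -/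
def FlexTrio (a b c : α) : Prop :=
  DivAtom a ∧ DivAtom b ∧ DivAtom c ∧ a ≠ b ∧ a ≠ c ∧ b ≠ c ∧
  comp a a = ⊤ ∧ comp b b = ⊤ ∧ comp c c = ⊤ ∧
  comp a b = (div : α) ∧ comp a c = (div : α) ∧ comp b c = (div : α) ∧
  ∀ x : α, IsAtom x → x ∉ ({(ide : α), a, b, c} : Set α) →
    (comp x a = (div : α) ∧ comp x b = (div : α)) ∨
    (comp x a = (div : α) ∧ comp x c = (div : α)) ∨
    (comp x b = (div : α) ∧ comp x c = (div : α))

/-- A flexible trio of diversity atoms of a subalgebra. -/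
def FlexTrioOf (E : Subalgebra α) (a b c : α) : Prop :=
  E.DivAtomOf a ∧ E.DivAtomOf b ∧ E.DivAtomOf c ∧ a ≠ b ∧ a ≠ c ∧ b ≠ c ∧
  comp a a = ⊤ ∧ comp b b = ⊤ ∧ comp c c = ⊤ ∧
  comp a b = (div : α) ∧ comp a c = (div : α) ∧ comp b c = (div : α) ∧
  ∀ d : α, E.DivAtomOf d → d ∉ ({a, b, c} : Set α) →
    (comp d a = (div : α) ∧ comp d b = (div : α)) ∨
    (comp d a = (div : α) ∧ comp d c = (div : α)) ∨
    (comp d b = (div : α) ∧ comp d c = (div : α))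

/-- Basic k-by-k matrices of atoms. -/
def BasicMatrix (k : ℕ) (μ : Fin k → Fin k → α) : Prop :=
  (∀ i j, IsAtom (μ i j)) ∧ (∀ i, μ i i ≤ (ide : α)) ∧
  (∀ i j, conv (μ i j) = μ j i) ∧
  (∀ i j l, μ i j ≤ comp (μ i l) (μ l j))

/-- The identity condition for a basic matrix. -/
def IdCond (k : ℕ) (μ : Fin k → Fin k → α) : Prop :=
  ∀ i j, μ i j = (ide : α) ↔ i = j

/-- The 1-point extension property. -/
def OnePointExt (α : Type u) [NA α] : Prop :=
  ∀ (k : ℕ) (μ : Fin k → Fin k → α), BasicMatrix k μ → IdCond k μ →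
  ∀ x y : α, DivAtom x → DivAtom y → ∀ i j : Fin k, i ≠ j → μ i j ≤ comp x y →
  ∃ μ' : Fin (k + 1) → Fin (k + 1) → α, BasicMatrix (k + 1) μ' ∧ IdCond (k + 1) μ' ∧
    (∀ l m : Fin k, μ' l.castSucc m.castSucc = μ l m) ∧
    μ' i.castSucc (Fin.last k) = x ∧ μ' (Fin.last k) j.castSucc = y

/-- A representation of `α` over a base set `X`. -/
structure Representation (α : Type u) [NA α] (X : Type v) where
  toFun : α → Set (X × X)
  inj : Function.Injective toFun
  map_sup : ∀ a b : α, toFun (a ⊔ b) = toFun a ∪ toFun b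
  map_compl : ∀ a : α, toFun aᶜ = toFun ⊤ \ toFun a
  map_comp : ∀ a b : α,
    toFun (comp a b) = {p | ∃ z, (p.1, z) ∈ toFun a ∧ (z, p.2) ∈ toFun b}
  map_conv : ∀ a : α, toFun (conv a) = {p | (p.2, p.1) ∈ toFun a}
  map_ide : toFun ide = {p | p ∈ toFun ⊤ ∧ p.1 = p.2}

/-- A complete representation: preserves all existing joins. -/
def Representation.IsComplete {α : Type u} [NA α] {X : Type v}
    (r : Representation α X) : Prop :=
  ∀ (S : Set α) (s : α), IsLUB S s → r.toFun s = ⋃ a ∈ S, r.toFun a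

/-- Representability. -/
def Representable (α : Type u) [NA α] : Prop :=
  ∃ X : Type u, Nonempty (Representation α X)

/-- A representation of a subalgebra `E` over a base set `X`. -/
structure SubRepresentation (E : Subalgebra α) (X : Type v) where
  toFun : α → Set (X × X)
  inj : ∀ x ∈ E.carrier, ∀ y ∈ E.carrier, toFun x = toFun y → x = y
  map_sup : ∀ x ∈ E.carrier, ∀ y ∈ E.carrier, toFun (x ⊔ y) = toFun x ∪ toFun y
  map_compl : ∀ x ∈ E.carrier, toFun xᶜ = toFun ⊤ \ toFun x
  map_comp : ∀ x ∈ E.carrier, ∀ y ∈ E.carrier,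
    toFun (comp x y) = {p | ∃ z, (p.1, z) ∈ toFun x ∧ (z, p.2) ∈ toFun y}
  map_conv : ∀ x ∈ E.carrier, toFun (conv x) = {p | (p.2, p.1) ∈ toFun x}
  map_ide : toFun ide = {p | p ∈ toFun ⊤ ∧ p.1 = p.2}

/-- A homomorphism of (non-associative) relation algebras. -/
structure Hom (α : Type u) (β : Type v) [NA α] [NA β] where
  toFun : α → β
  map_sup : ∀ a b : α, toFun (a ⊔ b) = toFun a ⊔ toFun b
  map_compl : ∀ a : α, toFun aᶜ = (toFun a)ᶜ
  map_comp : ∀ a b : α, toFun (comp a b) = comp (toFun a) (toFun b)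
  map_conv : ∀ a : α, toFun (conv a) = conv (toFun a)
  map_ide : toFun ide = ide

/-- The thinning relation T(i,j,k) ⟺ (i ≤ j = k) ∨ (j ≤ k = i) ∨ (k ≤ i = j). -/
def T3 (i j k : ℕ) : Prop :=
  (i ≤ j ∧ j = k) ∨ (j ≤ k ∧ k = i) ∨ (k ≤ i ∧ i = j)

/-- The type of diversity atoms of `α`. -/
abbrev DAt (α : Type u) [NA α] : Type u := {x : α // DivAtom x}

/-- Atoms of the algebra C_E(A): the identity atom `none` together with
copies `some (x, i)` of each diversity atom `x` of `A`, for `i ∈ ω`. -/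
abbrev CAtom (α : Type u) [NA α] : Type u := Option (DAt α × ℕ)

/-- The cycle relation of the atom structure of C_E(A), relative to the cover
map `cov` of the subalgebra E. -/
def Cyc (cov : α → α) : CAtom α → CAtom α → CAtom α → Prop
  | none, none, none => True
  | none, some p, some q => p = q
  | some p, none, some q => p = q
  | some p, some q, none => p = q
  | some p, some q, some r =>
      r.1.1 ≤ comp p.1.1 q.1.1 ∧
      (cov p.1.1 = cov q.1.1 ∧ cov q.1.1 = cov r.1.1 → T3 p.2 q.2 r.2)
  | _, _, _ => False

/-- Relative multiplication in the complex algebra C_E(A). -/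
def Ccomp (cov : α → α) (X Y : Set (CAtom α)) : Set (CAtom α) :=
  {w | ∃ u ∈ X, ∃ v ∈ Y, Cyc cov u v w}

/-- The element J(a, n) of C_E(A). -/
def Jel (a : α) (n : ℕ) : Set (CAtom α) :=
  {w | (∃ p : DAt α × ℕ, w = some p ∧ p.1.1 ≤ a ∧ n ≤ p.2) ∨
       (w = none ∧ (ide : α) ≤ a)}

/-- The atom set B_n of the finite subalgebra of C_E(A). -/
def Bset (E : Subalgebra α) (n : ℕ) : Set (Set (CAtom α)) :=
  {s | s = ({none} : Set (CAtom α))} ∪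
  {s | ∃ (x : DAt α) (i : ℕ), i < n ∧ s = {some (x, i)}} ∪
  {s | ∃ a : α, E.DivAtomOf a ∧ s = Jel a n}

/-- Subalgebra of C_E(A) generated by a set `G` of elements. -/
inductive GenFrom (cov : α → α) (G : Set (Set (CAtom α))) : Set (CAtom α) → Prop
  | base {s : Set (CAtom α)} : s ∈ G → GenFrom cov G s
  | bot : GenFrom cov G ∅
  | idel : GenFrom cov G ({none} : Set (CAtom α))
  | compl {s : Set (CAtom α)} : GenFrom cov G s → GenFrom cov G sᶜ
  | sup {s t : Set (CAtom α)} : GenFrom cov G s → GenFrom cov G t →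
      GenFrom cov G (s ∪ t)
  | cmp {s t : Set (CAtom α)} : GenFrom cov G s → GenFrom cov G t →
      GenFrom cov G (Ccomp cov s t)

/-- Membership in the subalgebra B of C_E(A) generated by the atoms. -/
def Gen (cov : α → α) : Set (CAtom α) → Prop :=
  GenFrom cov {s | ∃ w : CAtom α, s = {w}}

end NA

/-! An atom `w` of a product `u ; v` of elements of `B_n` that is `1'` or some `x^(i)` with
`i < n` is itself in `B_n`. The substance is the case `w = z^(k)` with `k ≥ n`, witnessed by a
cycle `[x^(i), y^(j), z^(k)]`: then all of `J(c, n)`, `c = cover(z)`, lies below `u ; v`.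
If `cover(x)`, `cover(y)`, `c` are not all equal, condition (i) gives `c ≤ x ; y` and no
thinning condition applies. If they are all equal, `T(i, j, k)` with `k ≥ n` forces `i ≥ n` or
`j ≥ n`, so one factor is `J(c, n)` itself; condition (ii) then supplies, for each `z'^(k')`
below `J(c, n)`, a matching atom of that factor, and the index `max i k'` (resp. `max j k'`)
satisfies the thinning condition. -/

namespace NA

section Lattice

variable {α : Type u} [NA α]

lemma comp_le_comp {x x' y y' : α} (hx : x ≤ x') (hy : y ≤ y') :
    comp x y ≤ comp x' y' := by
  calc comp x y ≤ comp x' y := by rw [← sup_eq_right.mpr hx, sup_comp]; exact le_sup_left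
    _ ≤ comp x' y' := by rw [← sup_eq_right.mpr hy, comp_sup]; exact le_sup_left

lemma comp_bot (x : α) : comp x ⊥ = ⊥ := by
  simpa using (peirce1 x ⊥ (comp x ⊥)).mpr (inf_bot_eq _)

lemma not_ide_le_of_le_div {a : α} (ha : a ≠ ⊥) (had : a ≤ div) : ¬ ide ≤ a := by
  intro hide
  have hbot : (ide : α) = ⊥ := le_compl_self.mp (hide.trans had)
  exact ha (by rw [← comp_ide a, hbot, comp_bot])

lemma atom_le_comp_iff_right (hsym : Symmetric α) {x y z : α} (hy : IsAtom y)
    (hz : IsAtom z) : z ≤ comp x y ↔ y ≤ comp x z := by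
  rw [← hz.not_disjoint_iff_le, ← hy.not_disjoint_iff_le, disjoint_comm, disjoint_iff,
    disjoint_comm, disjoint_iff, peirce1, hsym]

lemma atom_le_comp_iff_left (hsym : Symmetric α) {x y z : α} (hx : IsAtom x)
    (hz : IsAtom z) : z ≤ comp x y ↔ x ≤ comp z y := by
  rw [← hz.not_disjoint_iff_le, ← hx.not_disjoint_iff_le, disjoint_comm, disjoint_iff,
    disjoint_comm, disjoint_iff, peirce2, hsym]

lemma Subalgebra.inf_mem (E : Subalgebra α) {x y : α} (hx : x ∈ E.carrier)
    (hy : y ∈ E.carrier) : x ⊓ y ∈ E.carrier := by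
  simpa using E.compl_mem _ (E.sup_mem _ (E.compl_mem x hx) _ (E.compl_mem y hy))

lemma Subalgebra.div_mem (E : Subalgebra α) : (div : α) ∈ E.carrier :=
  E.compl_mem _ E.ide_mem

lemma Subalgebra.AtomOf.le_of_le_inf {E : Subalgebra α} {c t x : α} (hc : E.AtomOf c)
    (ht : t ∈ E.carrier) (hx : x ≠ ⊥) (hxc : x ≤ c ⊓ t) : c ≤ t :=
  inf_eq_left.mp ((hc.2.2 _ (E.inf_mem hc.1 ht) inf_le_left).resolve_left
    fun h => hx (le_bot_iff.mp (h ▸ hxc)))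

variable {E : Subalgebra α} {cov : α → α}

lemma CoverMap.divAtomOf_cov (hcov : CoverMap E cov) {x : α} (hx : DivAtom x) :
    E.DivAtomOf (cov x) :=
  ⟨(hcov x hx.1).1, (hcov x hx.1).1.le_of_le_inf E.div_mem hx.1.1 (le_inf (hcov x hx.1).2 hx.2)⟩

lemma CoverMap.cov_eq_of_le (hcov : CoverMap E cov) {x a : α} (hx : IsAtom x)
    (ha : E.AtomOf a) (hxa : x ≤ a) : cov x = a := by
  have hle : cov x ≤ a := (hcov x hx).1.le_of_le_inf ha.1 hx.1 (le_inf (hcov x hx).2 hxa)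
  exact (ha.2.2 _ (hcov x hx).1.1 hle).resolve_left (hcov x hx).1.2.1

lemma CoverMap.cov_le_comp_cov (hcov : CoverMap E cov) {x y z : α} (hx : IsAtom x)
    (hy : IsAtom y) (hz : IsAtom z) (hzxy : z ≤ comp x y) :
    cov z ≤ comp (cov x) (cov y) :=
  (hcov z hz).1.le_of_le_inf (E.comp_mem _ (hcov x hx).1.1 _ (hcov y hy).1.1) hz.1
    (le_inf (hcov z hz).2 (hzxy.trans (comp_le_comp (hcov x hx).2 (hcov y hy).2)))

lemma SpecialExt.exists_atom_le_right [IsAtomic α] (hsym : Symmetric α) (hspec : SpecialExt E)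
    {a x z : α} (ha : E.DivAtomOf a) (haa : a ≤ comp a a) (hx : IsAtom x) (hxa : x ≤ a)
    (hz : IsAtom z) (hza : z ≤ a) : ∃ y, IsAtom y ∧ y ≤ a ∧ z ≤ comp x y := by
  obtain ⟨y, hy, hyle⟩ :=
    (eq_bot_or_exists_atom_le _).resolve_left (hspec.2 a ha haa x z hx hz hxa hza)
  exact ⟨y, hy, hyle.trans inf_le_right,
    (atom_le_comp_iff_right hsym hy hz).mpr (hyle.trans inf_le_left)⟩

lemma SpecialExt.exists_atom_le_left [IsAtomic α] (hsym : Symmetric α) (hspec : SpecialExt E)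
    {a y z : α} (ha : E.DivAtomOf a) (haa : a ≤ comp a a) (hy : IsAtom y) (hya : y ≤ a)
    (hz : IsAtom z) (hza : z ≤ a) : ∃ x, IsAtom x ∧ x ≤ a ∧ z ≤ comp x y := by
  obtain ⟨x, hx, hxle⟩ :=
    (eq_bot_or_exists_atom_le _).resolve_left (hspec.2 a ha haa z y hz hy hza hya)
  exact ⟨x, hx, hxle.trans inf_le_right,
    (atom_le_comp_iff_left hsym hx hz).mpr (hxle.trans inf_le_left)⟩

end Lattice

lemma T3.le_max {i j k : ℕ} (h : T3 i j k) : k ≤ max i j := by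
  unfold T3 at h; omega

lemma T3_max_right (i k : ℕ) : T3 i (max i k) k := by
  unfold T3; omega

lemma T3_max_left (j k : ℕ) : T3 (max j k) j k := by
  unfold T3; omega

section Complex

variable {α : Type u} [NA α] {E : Subalgebra α} {cov : α → α} {n : ℕ}

lemma mem_jel_some {a : α} {p : DAt α × ℕ} :
    (some p : CAtom α) ∈ Jel a n ↔ p.1.1 ≤ a ∧ n ≤ p.2 := by
  refine ⟨?_, fun h => Or.inl ⟨p, rfl, h⟩⟩
  rintro (⟨q, hq, h⟩ | ⟨h, -⟩)
  · cases hq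
    exact h
  · cases h

lemma jel_subset {a : α} {X : Set (CAtom α)} (ha : a ≠ ⊥) (had : a ≤ div)
    (h : ∀ (z : DAt α) (k : ℕ), z.1 ≤ a → n ≤ k → some (z, k) ∈ X) : Jel a n ⊆ X := by
  rintro w (⟨⟨z, k⟩, rfl, hza, hk⟩ | ⟨-, hide⟩)
  · exact h z k hza hk
  · exact absurd hide (not_ide_le_of_le_div ha had)

lemma subset_ccomp_of_none_mem_left {u : Set (CAtom α)} (v : Set (CAtom α))
    (hu : none ∈ u) : v ⊆ Ccomp cov u v := by
  intro w hw
  exact ⟨none, hu, w, hw, by cases w <;> simp [Cyc]⟩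

lemma subset_ccomp_of_none_mem_right (u : Set (CAtom α)) {v : Set (CAtom α)}
    (hv : none ∈ v) : u ⊆ Ccomp cov u v := by
  intro w hw
  exact ⟨w, hw, none, hv, by cases w <;> simp [Cyc]⟩

lemma CoverMap.eq_jel_of_mem (hcov : CoverMap E cov) {b : Set (CAtom α)} (hb : b ∈ Bset E n)
    {z : DAt α} {k : ℕ} (hzk : some (z, k) ∈ b) (hk : n ≤ k) : b = Jel (cov z.1) n := by
  rcases hb with (rfl | ⟨x, i, hi, rfl⟩) | ⟨a, ha, rfl⟩
  · simp at hzk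
  · simp only [Set.mem_singleton_iff, Option.some.injEq, Prod.mk.injEq] at hzk
    omega
  · rw [hcov.cov_eq_of_le z.2.1 ha.1 (mem_jel_some.mp hzk).1]

lemma jel_subset_ccomp_of_not_flex (hcov : CoverMap E cov) {u v : Set (CAtom α)}
    {x y : DAt α} {i j : ℕ} (hxu : some (x, i) ∈ u) (hyv : some (y, j) ∈ v) {c : α}
    (hc : E.DivAtomOf c) (hcxy : c ≤ comp x.1 y.1) (hne : ¬(cov x.1 = cov y.1 ∧ cov y.1 = c)) :
    Jel c n ⊆ Ccomp cov u v :=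
  jel_subset hc.1.2.1 hc.2 fun z _ hzc _ =>
    ⟨_, hxu, _, hyv, hzc.trans hcxy,
      fun h => absurd ⟨h.1, h.2.trans (hcov.cov_eq_of_le z.2.1 hc.1 hzc)⟩ hne⟩

variable [IsAtomic α]

lemma jel_subset_ccomp_jel_right (hsym : Symmetric α) (hspec : SpecialExt E)
    {u : Set (CAtom α)} {c : α} (hc : E.DivAtomOf c) (hcc : c ≤ comp c c) {x : DAt α} {i : ℕ}
    (hxu : some (x, i) ∈ u) (hxc : x.1 ≤ c) : Jel c n ⊆ Ccomp cov u (Jel c n) := by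
  refine jel_subset hc.1.2.1 hc.2 fun z k hzc hk => ?_
  obtain ⟨y, hy, hyc, hzxy⟩ := hspec.exists_atom_le_right hsym hc hcc x.2.1 hxc z.2.1 hzc
  exact ⟨_, hxu, some (⟨y, hy, hyc.trans hc.2⟩, max i k),
    mem_jel_some.mpr ⟨hyc, hk.trans (le_max_right _ _)⟩, hzxy, fun _ => T3_max_right i k⟩

lemma jel_subset_ccomp_jel_left (hsym : Symmetric α) (hspec : SpecialExt E)
    {v : Set (CAtom α)} {c : α} (hc : E.DivAtomOf c) (hcc : c ≤ comp c c) {y : DAt α} {j : ℕ}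
    (hyv : some (y, j) ∈ v) (hyc : y.1 ≤ c) : Jel c n ⊆ Ccomp cov (Jel c n) v := by
  refine jel_subset hc.1.2.1 hc.2 fun z k hzc hk => ?_
  obtain ⟨x, hx, hxc, hzxy⟩ := hspec.exists_atom_le_left hsym hc hcc y.2.1 hyc z.2.1 hzc
  exact ⟨some (⟨x, hx, hxc.trans hc.2⟩, max j k),
    mem_jel_some.mpr ⟨hxc, hk.trans (le_max_right _ _)⟩, _, hyv, hzxy, fun _ => T3_max_left j k⟩

lemma jel_cov_subset_ccomp (hsym : Symmetric α) (hcov : CoverMap E cov) (hspec : SpecialExt E)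
    {u v : Set (CAtom α)} (hu : u ∈ Bset E n) (hv : v ∈ Bset E n) {z : DAt α} {k : ℕ}
    (hk : n ≤ k) (hzk : some (z, k) ∈ Ccomp cov u v) : Jel (cov z.1) n ⊆ Ccomp cov u v := by
  obtain ⟨u', hu', v', hv', hcyc⟩ := hzk
  -- `[1', 1', z^(k)]` is not a cycle, so the match needs no `none, none` case.
  match u', v', hcyc with
  | none, some _, rfl => exact hcov.eq_jel_of_mem hv hv' hk ▸ subset_ccomp_of_none_mem_left v hu'
  | some _, none, rfl => exact hcov.eq_jel_of_mem hu hu' hk ▸ subset_ccomp_of_none_mem_right u hv'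
  | some (x, i), some (y, j), ⟨hzxy, hT⟩ =>
    have hc := hcov.divAtomOf_cov z.2
    have hcxy := hcov.cov_le_comp_cov x.2.1 y.2.1 z.2.1 hzxy
    by_cases hflex : cov x.1 = cov y.1 ∧ cov y.1 = cov z.1
    · obtain ⟨hxy, hyz⟩ := hflex
      rw [hxy, hyz] at hcxy
      rcases le_max_iff.mp (hk.trans (hT ⟨hxy, hyz⟩).le_max) with hi | hj
      · have hu_eq := hcov.eq_jel_of_mem hu hu' hi
        rw [hxy, hyz] at hu_eq
        subst hu_eq
        exact jel_subset_ccomp_jel_left hsym hspec hc hcxy hv' (hyz ▸ (hcov y.1 y.2.1).2)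
      · have hv_eq := hcov.eq_jel_of_mem hv hv' hj
        rw [hyz] at hv_eq
        subst hv_eq
        exact jel_subset_ccomp_jel_right hsym hspec hc hcxy hu'
          (hyz ▸ hxy ▸ (hcov x.1 x.2.1).2)
    · exact jel_subset_ccomp_of_not_flex hcov hu' hv' hc
        (hspec.1 _ _ _ (hcov.divAtomOf_cov x.2) (hcov.divAtomOf_cov y.2) hc hflex hcxy
          x.1 y.1 x.2.1 y.2.1 (hcov x.1 x.2.1).2 (hcov y.1 y.2.1).2) hflex

lemma exists_bset_mem_subset_ccomp (hsym : Symmetric α) (hcov : CoverMap E cov)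
    (hspec : SpecialExt E) {u v : Set (CAtom α)} (hu : u ∈ Bset E n) (hv : v ∈ Bset E n)
    {w : CAtom α} (hw : w ∈ Ccomp cov u v) : ∃ b ∈ Bset E n, w ∈ b ∧ b ⊆ Ccomp cov u v := by
  match w with
  | none => exact ⟨{none}, Or.inl (Or.inl rfl), rfl, Set.singleton_subset_iff.mpr hw⟩
  | some (z, k) =>
    by_cases hk : k < n
    · exact ⟨_, Or.inl (Or.inr ⟨z, k, hk, rfl⟩), rfl, Set.singleton_subset_iff.mpr hw⟩
    · exact ⟨_, Or.inr ⟨cov z.1, hcov.divAtomOf_cov z.2, rfl⟩,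
        mem_jel_some.mpr ⟨(hcov z.1 z.2.1).2, not_lt.mp hk⟩,
        jel_cov_subset_ccomp hsym hcov hspec hu hv (not_lt.mp hk) hw⟩

end Complex

end NA

theorem stmt8_general {α : Type} [RA α] [Fintype α]
    (hsym : NA.Symmetric α)
    (E : NA.Subalgebra α) (cov : α → α) (hcov : NA.CoverMap E cov)
    (hspec : NA.SpecialExt E) (n : ℕ) :
    ∀ u ∈ NA.Bset E n, ∀ v ∈ NA.Bset E n,
      ∃ S ⊆ NA.Bset E n, NA.Ccomp cov u v = ⋃₀ S := by
  intro u hu v hv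
  refine ⟨{b | b ∈ NA.Bset E n ∧ b ⊆ NA.Ccomp cov u v}, fun b hb => hb.1,
    subset_antisymm (fun w hw => ?_) (Set.sUnion_subset fun b hb => hb.2)⟩
  obtain ⟨b, hb, hwb, hbuv⟩ := NA.exists_bset_mem_subset_ccomp hsym hcov hspec hu hv hw
  exact ⟨b, ⟨hb, hbuv⟩, hwb⟩

/-- If A is a special extension of E, then for every n the set
B_n = {1'} ∪ {x^(i) : i < n} ∪ {J(a,n) : a a diversity atom of E} is the atom
set of a subalgebra of C_E(A): any product of two of its elements is a join of
elements of B_n. -/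
theorem stmt8 {α : Type} [RA α] [Fintype α]
    (hsym : NA.Symmetric α) (hint : NA.Integral α)
    (E : NA.Subalgebra α) (cov : α → α) (hcov : NA.CoverMap E cov)
    (hspec : NA.SpecialExt E) (n : ℕ) :
    ∀ u ∈ NA.Bset E n, ∀ v ∈ NA.Bset E n,
      ∃ S ⊆ NA.Bset E n, NA.Ccomp cov u v = ⋃₀ S :=
  stmt8_general hsym E cov hcov hspec n
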